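/- arXiv:math/0612829 — 6 statements merged into one kernel-verified Lean document; each statement's English description precedes it below -/
import Mathlib

section
/- Let R be a real analytic subset of an open set Ω ⊆ ℂⁿ, and for p ∈ R let d(p) denote the complex dimension at p of the smallest complex analytic germ X_p containing R_p (so dim_p X = 2·d(p) for any representative X of this germ). Then d is upper semicontinuous on R: for every p ∈ R there is an open neighborhood V of p such that d(q) ≤ d(p) for every q ∈ R ∩ V. -/
open scoped ENNReal

noncomputable section

/-- Germ inclusion `R_p ⊆ Q_p`: `R ∩ V ⊆ Q` for some open neighbourhood `V` of `p`. -/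
def GermLE {E : Type*} [TopologicalSpace E] (R Q : Set E) (p : E) : Prop :=
  ∃ V : Set E, IsOpen V ∧ p ∈ V ∧ R ∩ V ⊆ Q

/-- `R` is a real analytic subset of the open set `Ω`. -/
def IsRealAnalyticSubset {E : Type*} [NormedAddCommGroup E] [NormedSpace ℝ E]
    (Ω R : Set E) : Prop :=
  R ⊆ Ω ∧ ∀ p ∈ Ω, ∃ U : Set E, IsOpen U ∧ p ∈ U ∧ U ⊆ Ω ∧
    ∃ (k : ℕ) (φ : Fin k → E → ℝ),
      (∀ i, AnalyticOnNhd ℝ (φ i) U) ∧ R ∩ U = {x ∈ U | ∀ i, φ i x = 0}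

/-- `X` is a complex analytic subset of the open set `W`. -/
def IsComplexAnalyticSubset {E : Type*} [NormedAddCommGroup E] [NormedSpace ℂ E]
    (W X : Set E) : Prop :=
  X ⊆ W ∧ ∀ p ∈ W, ∃ U : Set E, IsOpen U ∧ p ∈ U ∧ U ⊆ W ∧
    ∃ (k : ℕ) (φ : Fin k → E → ℂ),
      (∀ i, AnalyticOnNhd ℂ (φ i) U) ∧ X ∩ U = {x ∈ U | ∀ i, φ i x = 0}

/-- The local (Hausdorff) dimension of `R` at `p`. -/
def locDim {E : Type*} [EMetricSpace E] (R : Set E) (p : E) : ℝ≥0∞ :=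
  ⨅ (U : Set E) (_ : IsOpen U) (_ : p ∈ U), dimH (R ∩ U)

/-- `X` represents the smallest complex analytic germ at `p` containing the germ of `R`. -/
def IsSmallestComplexGermAt {E : Type*} [NormedAddCommGroup E] [NormedSpace ℂ E]
    (R : Set E) (p : E) (X : Set E) : Prop :=
  (∃ U : Set E, IsOpen U ∧ p ∈ U ∧ IsComplexAnalyticSubset U X) ∧
  GermLE R X p ∧
  ∀ (U' Y : Set E), IsOpen U' → p ∈ U' → IsComplexAnalyticSubset U' Y →
    GermLE R Y p → GermLE X Y p

/-- `S` is closed and nowhere dense in `R` (with its subspace topology). -/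
def ClosedNowhereDenseIn {E : Type*} [TopologicalSpace E] (R S : Set E) : Prop :=
  S ⊆ R ∧ IsClosed {x : R | (x : E) ∈ S} ∧ interior {x : R | (x : E) ∈ S} = ∅

/-- The complex dimension `d(p)` of the smallest complex analytic germ
containing `R_p` is upper semicontinuous on a real analytic set `R`. -/
theorem statement8 {n : ℕ} (Ω R : Set (Fin n → ℂ)) (hΩ : IsOpen Ω)
    (hR : IsRealAnalyticSubset Ω R) (d : (Fin n → ℂ) → ℕ)
    (hd : ∀ p ∈ R, ∃ X : Set (Fin n → ℂ), IsSmallestComplexGermAt R p X ∧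
      locDim X p = 2 * (d p : ℝ≥0∞)) :
    ∀ p ∈ R, ∃ V : Set (Fin n → ℂ), IsOpen V ∧ p ∈ V ∧
      ∀ q ∈ R ∩ V, d q ≤ d p := by
  intro p hp
  obtain ⟨X, ⟨⟨U'', hU''o, hpU'', hXsub⟩, ⟨V0, hV0o, hpV0, hRV0⟩, _⟩, hXdim⟩ := hd p hp
  -- choose U with dimH (X ∩ U) < 2 * d p + 2
  have hfin : (2 * (d p : ℝ≥0∞)) < 2 * (d p : ℝ≥0∞) + 2 := by
    refine ENNReal.lt_add_right ?_ (by norm_num)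
    exact ENNReal.mul_ne_top (by norm_num) (ENNReal.natCast_ne_top _)
  have hlt : locDim X p < 2 * (d p : ℝ≥0∞) + 2 := hXdim ▸ hfin
  rw [locDim, iInf_lt_iff] at hlt
  obtain ⟨U, hlt⟩ := hlt
  rw [iInf_lt_iff] at hlt
  obtain ⟨hUo, hlt⟩ := hlt
  rw [iInf_lt_iff] at hlt
  obtain ⟨hpU, hdimU⟩ := hlt
  refine ⟨V0 ∩ U ∩ U'', (hV0o.inter hUo).inter hU''o,
    ⟨⟨hpV0, hpU⟩, hpU''⟩, ?_⟩
  rintro q ⟨hqR, ⟨hqV0, hqU⟩, hqU''⟩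
  obtain ⟨Y, ⟨_, _, hYmin⟩, hYdim⟩ := hd q hqR
  have hgerm : GermLE R X q := ⟨V0, hV0o, hqV0, hRV0⟩
  obtain ⟨W1, hW1o, hqW1, hYW1⟩ := hYmin U'' X hU''o hqU'' hXsub hgerm
  -- locDim Y q ≤ dimH (X ∩ U)
  have hle : locDim Y q ≤ dimH (X ∩ U) := by
    have h1 : locDim Y q ≤ dimH (Y ∩ (W1 ∩ U)) := by
      refine iInf_le_of_le (W1 ∩ U) ?_
      exact iInf_le_of_le (hW1o.inter hUo) (iInf_le_of_le ⟨hqW1, hqU⟩ le_rfl)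
    refine h1.trans (dimH_mono ?_)
    rintro x ⟨hxY, hxW1, hxU⟩
    exact ⟨hYW1 ⟨hxY, hxW1⟩, hxU⟩
  have : 2 * (d q : ℝ≥0∞) < 2 * (d p : ℝ≥0∞) + 2 :=
    hYdim ▸ (hle.trans_lt hdimU)
  have hcast : ((2 * d q : ℕ) : ℝ≥0∞) < ((2 * d p + 2 : ℕ) : ℝ≥0∞) := by
    push_cast
    convert this using 2 <;> ring
  rw [Nat.cast_lt] at hcast
  omega
end
end

section
/- Let U ⊆ ℂⁿ × ℂⁿ be open and connected, and suppose U ∩ 𝔇 ≠ ∅, where 𝔇 = {(z, z̄) : z ∈ ℂⁿ}. If f is holomorphic on U and f vanishes at every point of 𝔇 ∩ U, then f vanishes identically on U. -/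
open scoped ENNReal

noncomputable section

/-- The totally real embedding `𝔡(ζ) = (ζ, ζ̄)` of `ℂⁿ` into `ℂ²ⁿ`. -/
def dd (n : ℕ) (ζ : Fin n → ℂ) : (Fin n → ℂ) × (Fin n → ℂ) :=
  (ζ, fun j => (starRingEnd ℂ) (ζ j))

/-!
The ℂ-linear isomorphism `(x, y) ↦ (x + i y, x - i y)` of `ℂ²ⁿ` maps the real points `ℝ²ⁿ` onto
`𝔇`, so it suffices to treat functions vanishing on the real points. A holomorphic function
vanishing on the real points of a polydisc centred at a real point vanishes on the polydisc:
freeing one coordinate at a time, each slice is a holomorphic function of one variable vanishing on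
a real segment, hence on the whole disc by the identity theorem. Then `f` vanishes near a point of
`𝔇 ∩ U`, and the identity theorem on the connected set `U` finishes the proof.
-/
open Complex Filter Function Metric Set Topology

theorem Complex.frequently_im_eq_zero_nhdsNE {z : ℂ} (hz : z.im = 0) :
    ∃ᶠ w in 𝓝[≠] z, w.im = 0 := by
  have hz_re : (z.re : ℂ) = z := Complex.ext rfl (by simp [hz])
  have hreal : Tendsto ofReal (𝓝[≠] z.re) (𝓝[≠] z) := by
    rw [← hz_re]
    exact continuous_ofReal.continuousWithinAt.tendsto_nhdsWithin fun _ h => by simpa using h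
  exact hreal.frequently (Frequently.of_forall ofReal_im)

theorem analyticOnNhd_update {𝕜 ι : Type*} [NontriviallyNormedField 𝕜] [Fintype ι]
    [DecidableEq ι] {F : ι → Type*} [∀ i, NormedAddCommGroup (F i)] [∀ i, NormedSpace 𝕜 (F i)]
    (v : ∀ i, F i) (j : ι) (s : Set (F j)) : AnalyticOnNhd 𝕜 (update v j) s := by
  have hupd : update v j = fun w => update v j 0 + ContinuousLinearMap.single 𝕜 F j w := by
    funext w i
    rcases eq_or_ne i j with rfl | h <;> simp [*]
  rw [hupd]
  exact analyticOnNhd_const.add ((ContinuousLinearMap.single 𝕜 F j).analyticOnNhd s)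

theorem Metric.update_mem_ball {ι : Type*} [Fintype ι] [DecidableEq ι] {X : ι → Type*}
    [∀ i, PseudoMetricSpace (X i)] {c v : ∀ i, X i} {r : ℝ} (hv : v ∈ ball c r) {j : ι}
    {w : X j} (hw : w ∈ ball (c j) r) : update v j w ∈ ball c r := by
  have hr := pos_of_mem_ball hv
  rw [ball_pi c hr] at hv ⊢
  exact (update_mem_pi_iff_of_mem hv).2 fun _ => hw

section

variable {E : Type*} [NormedAddCommGroup E] [NormedSpace ℂ E]

theorem AnalyticOnNhd.eqOn_zero_of_preconnected_of_forall_im_eq_zero {g : ℂ → E} {D : Set ℂ}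
    (hg : AnalyticOnNhd ℂ g D) (hDo : IsOpen D) (hDc : IsPreconnected D) {z₀ : ℂ} (hz₀ : z₀ ∈ D)
    (hz₀im : z₀.im = 0) (h0 : ∀ z ∈ D, z.im = 0 → g z = 0) : EqOn g 0 D :=
  hg.eqOn_zero_of_preconnected_of_frequently_eq_zero hDc hz₀ <|
    ((frequently_im_eq_zero_nhdsNE hz₀im).and_eventually
      (mem_nhdsWithin_of_mem_nhds (hDo.mem_nhds hz₀))).mono fun z hz => h0 z hz.2 hz.1

theorem AnalyticOnNhd.eqOn_zero_ball_of_forall_im_eq_zero {ι : Type*} [Fintype ι]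
    {g : (ι → ℂ) → E} {c : ι → ℂ} (hc : ∀ i, (c i).im = 0) {r : ℝ}
    (hg : AnalyticOnNhd ℂ g (ball c r))
    (h0 : ∀ v ∈ ball c r, (∀ i, (v i).im = 0) → g v = 0) : EqOn g 0 (ball c r) := by
  classical
  -- Induction on the set `s` of coordinates allowed to leave the real axis.
  suffices H : ∀ s : Finset ι, ∀ v ∈ ball c r, (∀ i ∉ s, (v i).im = 0) → g v = 0 from
    fun v hv => H Finset.univ v hv fun i hi => absurd (Finset.mem_univ i) hi
  intro s
  induction s using Finset.induction_on with
  | empty => exact fun v hv hvre => h0 v hv fun i => hvre i (Finset.notMem_empty i)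
  | insert j s _ ih =>
    intro v hv hvre
    have hupd : MapsTo (update v j) (ball (c j) r) (ball c r) := fun w hw => update_mem_ball hv hw
    have hline : EqOn (g ∘ update v j) 0 (ball (c j) r) := by
      refine (hg.comp (analyticOnNhd_update v j _) hupd)
        |>.eqOn_zero_of_preconnected_of_forall_im_eq_zero isOpen_ball
          (convex_ball _ _).isPreconnected (mem_ball_self (pos_of_mem_ball hv)) (hc j)
          fun w hw hwim => ih _ (hupd hw) fun i hi => ?_
      rcases eq_or_ne i j with rfl | hij
      · simpa using hwim
      · simpa [hij] using hvre i (by simp [hij, hi])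
    simpa using hline (show v j ∈ ball (c j) r from (dist_le_pi_dist v c j).trans_lt hv)

theorem AnalyticOnNhd.eqOn_zero_of_preconnected_of_forall_im_eq_zero_of_equiv {ι F : Type*}
    [Fintype ι] [NormedAddCommGroup F] [NormedSpace ℂ F] (L : (ι → ℂ) ≃L[ℂ] F) {U : Set F}
    (hU : IsOpen U) (hUc : IsPreconnected U) {f : F → E} (hf : AnalyticOnNhd ℂ f U)
    {c : ι → ℂ} (hc : ∀ i, (c i).im = 0) (hcU : L c ∈ U)
    (h0 : ∀ v, (∀ i, (v i).im = 0) → L v ∈ U → f (L v) = 0) : EqOn f 0 U := by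
  obtain ⟨r, hr, hball⟩ := Metric.isOpen_iff.1 (hU.preimage L.continuous) c hcU
  have hball0 : EqOn (f ∘ L) 0 (ball c r) :=
    (hf.comp (L.toContinuousLinearMap.analyticOnNhd _) hball).eqOn_zero_ball_of_forall_im_eq_zero
      hc fun v hv hvim => h0 v hvim (hball hv)
  refine hf.eqOn_zero_of_preconnected_of_eventuallyEq_zero hUc hcU ?_
  filter_upwards [L.isOpenMap.image_mem_nhds (ball_mem_nhds c hr)]
  rintro _ ⟨v, hv, rfl⟩
  exact hball0 hv

end

def realCoordEquiv (n : ℕ) : (Fin n ⊕ Fin n → ℂ) ≃L[ℂ] (Fin n → ℂ) × (Fin n → ℂ) :=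
  LinearEquiv.toContinuousLinearEquiv
  { toFun v := (fun j => v (.inl j) + I * v (.inr j), fun j => v (.inl j) - I * v (.inr j))
    invFun x := Sum.elim (fun j => (x.1 j + x.2 j) / 2) (fun j => (x.1 j - x.2 j) / (2 * I))
    map_add' v w := by ext j <;> simp <;> ring
    map_smul' a v := by ext j <;> simp <;> ring
    left_inv v := by
      ext (j | j)
      · simp
      · simp
        field_simp
        ring
    right_inv x := by ext j <;> simp <;> field_simp <;> ring }

theorem realCoordEquiv_mem_range_dd {n : ℕ} {v : Fin n ⊕ Fin n → ℂ} (hv : ∀ i, (v i).im = 0) :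
    realCoordEquiv n v ∈ range (dd n) := by
  refine ⟨fun j => v (.inl j) + I * v (.inr j), Prod.ext rfl <| funext fun j => ?_⟩
  simp [dd, realCoordEquiv, conj_eq_iff_im.2 (hv _)]
  ring

theorem dd_eq_realCoordEquiv (n : ℕ) (ζ : Fin n → ℂ) :
    dd n ζ = realCoordEquiv n (ofReal ∘ Sum.elim (fun j => (ζ j).re) fun j => (ζ j).im) := by
  ext j <;> apply Complex.ext <;> simp [dd, realCoordEquiv]

/-- A holomorphic function on a connected open set `U ⊆ ℂⁿ × ℂⁿ` meeting
the totally real subspace `𝔇 = {(z, z̄)}` which vanishes on `𝔇 ∩ U` vanishes identically. -/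
theorem statement10 {n : ℕ} (U : Set ((Fin n → ℂ) × (Fin n → ℂ)))
    (hUopen : IsOpen U) (hUconn : IsConnected U)
    (hUD : (U ∩ Set.range (dd n)).Nonempty)
    (f : (Fin n → ℂ) × (Fin n → ℂ) → ℂ) (hf : AnalyticOnNhd ℂ f U)
    (hvan : ∀ x ∈ Set.range (dd n) ∩ U, f x = 0) :
    ∀ x ∈ U, f x = 0 := by
  obtain ⟨_, hpU, ζ, rfl⟩ := hUD
  rw [dd_eq_realCoordEquiv] at hpU
  exact fun x hx => hf.eqOn_zero_of_preconnected_of_forall_im_eq_zero_of_equiv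
    (realCoordEquiv n) hUopen hUconn.isPreconnected (fun _ => ofReal_im _) hpU
    (fun v hv hvU => hvan _ ⟨realCoordEquiv_mem_range_dd hv, hvU⟩) hx
end
end

section
/- Let R = {(z₁, z₂) ∈ ℂ² : (Re z₂)·((Re z₁)² + (Im z₁)²) = (Re z₁)³ and Im z₂ = 0} (Cartan's umbrella). If U is a connected open neighborhood of the origin in ℂ² and f is holomorphic on U with f = 0 at every point of R ∩ U, then f vanishes identically on U. (Equivalently, the smallest complex analytic germ at 0 containing the germ of R at 0 is the germ of all of ℂ².) -/
open scoped ENNReal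

noncomputable section

/-- Cartan's umbrella `{x₂(x₁² + y₁²) = x₁³, y₂ = 0} ⊆ ℂ²`. -/
def cartanUmbrella : Set (ℂ × ℂ) :=
  {z | z.2.re * (z.1.re ^ 2 + z.1.im ^ 2) = z.1.re ^ 3 ∧ z.2.im = 0}

open Metric Filter Set Topology

/-- The smallest complex analytic germ at `0` containing the germ of
Cartan's umbrella is all of `ℂ²`: any holomorphic function on a connected neighbourhood of
the origin vanishing on the umbrella vanishes identically. -/
theorem statement11 (U : Set (ℂ × ℂ)) (hUopen : IsOpen U) (hUconn : IsConnected U)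
    (h0 : (0 : ℂ × ℂ) ∈ U) (f : ℂ × ℂ → ℂ) (hf : AnalyticOnNhd ℂ f U)
    (hvan : ∀ z ∈ cartanUmbrella ∩ U, f z = 0) :
    ∀ z ∈ U, f z = 0 := by
  obtain ⟨r, hr, hball⟩ := Metric.isOpen_iff.1 hUopen 0 h0
  have hsub : Metric.ball (0:ℂ) r ×ˢ Metric.ball (0:ℂ) r ⊆ U := by
    rw [ball_prod_same]; exact hball
  have step1 : ∀ c : ℝ, 0 < c → c < r → ∀ z₁ ∈ Metric.ball (0:ℂ) r, f (z₁, (c:ℂ)) = 0 := by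
    intro c hc hcr
    have hcball : ((c:ℂ)) ∈ Metric.ball (0:ℂ) r := by
      simp only [Metric.mem_ball, dist_zero_right, Complex.norm_real, Real.norm_eq_abs]
      rw [abs_of_pos hc]; linarith
    have hfan : AnalyticOnNhd ℂ (fun w : ℂ => f (w, (c:ℂ))) (Metric.ball 0 r) := by
      intro w hw
      have hg : AnalyticAt ℂ (fun w : ℂ => (w, (c:ℂ))) w := analyticAt_id.prod analyticAt_const
      exact AnalyticAt.comp (x := w) (hf (w, (c:ℂ)) (hsub ⟨hw, hcball⟩)) hg
    set z : ℝ → ℂ := fun t => Complex.ofReal (c*(1+t^2)) + Complex.I * Complex.ofReal (c*(1+t^2)*t) with hz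
    have hre : ∀ t, (z t).re = c*(1+t^2) := by intro t; simp only [hz, Complex.add_re, Complex.add_im, Complex.mul_re, Complex.mul_im, Complex.I_re, Complex.I_im, Complex.ofReal_re, Complex.ofReal_im]; ring
    have him : ∀ t, (z t).im = c*(1+t^2)*t := by intro t; simp only [hz, Complex.add_re, Complex.add_im, Complex.mul_re, Complex.mul_im, Complex.I_re, Complex.I_im, Complex.ofReal_re, Complex.ofReal_im]; ring
    have hzc : Continuous z := by fun_prop
    have hz0 : z 0 = (c:ℂ) := by simp [hz]
    have htend : Tendsto z (𝓝[≠] (0:ℝ)) (𝓝[≠] ((c:ℂ))) := by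
      apply tendsto_nhdsWithin_of_tendsto_nhds_of_eventually_within
      · exact hz0 ▸ (hzc.tendsto 0).mono_left nhdsWithin_le_nhds
      · filter_upwards [self_mem_nhdsWithin] with t ht
        simp only [Set.mem_compl_iff, Set.mem_singleton_iff] at ht ⊢
        intro h
        have : (z t).im = ((c:ℂ)).im := by rw [h]
        rw [him] at this
        simp only [Complex.ofReal_im] at this
        rcases mul_eq_zero.1 this with h' | h'
        · nlinarith
        · exact ht h'
    have hfreq0 : ∀ᶠ t in 𝓝[≠] (0:ℝ), f (z t, (c:ℂ)) = 0 := by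
      have hmem : ∀ᶠ t in 𝓝 (0:ℝ), z t ∈ Metric.ball (0:ℂ) r :=
        hzc.continuousAt.eventually_mem (Metric.isOpen_ball.mem_nhds (hz0 ▸ hcball))
      filter_upwards [nhdsWithin_le_nhds hmem] with t ht
      apply hvan
      refine ⟨⟨?_, by simp⟩, hsub ⟨ht, hcball⟩⟩
      simp only [hre, him, Complex.ofReal_re]
      ring
    have hfreq : ∃ᶠ w in 𝓝[≠] ((c:ℂ)), f (w, (c:ℂ)) = 0 := htend.frequently hfreq0.frequently
    exact fun z₁ hz₁ =>
      hfan.eqOn_zero_of_preconnected_of_frequently_eq_zero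
        (convex_ball (0:ℂ) r).isPreconnected hcball hfreq hz₁
  have step2 : ∀ p ∈ Metric.ball ((0 : ℂ × ℂ)) r, f p = 0 := by
    intro p hp
    rw [← ball_prod_same] at hp
    obtain ⟨hp1, hp2⟩ := hp
    have hfan : AnalyticOnNhd ℂ (fun w : ℂ => f (p.1, w)) (Metric.ball 0 r) := by
      intro w hw
      have hg : AnalyticAt ℂ (fun w : ℂ => (p.1, w)) w := analyticAt_const.prod analyticAt_id
      exact AnalyticAt.comp (x := w) (hf (p.1, w) (hsub ⟨hp1, hw⟩)) hg
    have hr2 : ((r/2 : ℝ):ℂ) ∈ Metric.ball (0:ℂ) r := by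
      simp only [Metric.mem_ball, dist_zero_right, Complex.norm_real, Real.norm_eq_abs]
      rw [abs_of_pos (by linarith)]; linarith
    have hfreq : ∃ᶠ w in 𝓝[≠] (((r/2:ℝ)):ℂ), f (p.1, w) = 0 := by
      set g : ℝ → ℂ := fun t => ((r/2 + t : ℝ) : ℂ) with hg
      have hgc : Continuous g := by fun_prop
      have hg0 : g 0 = ((r/2:ℝ):ℂ) := by simp [hg]
      have htend : Tendsto g (𝓝[≠] (0:ℝ)) (𝓝[≠] (((r/2:ℝ)):ℂ)) := by
        apply tendsto_nhdsWithin_of_tendsto_nhds_of_eventually_within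
        · exact hg0 ▸ (hgc.tendsto 0).mono_left nhdsWithin_le_nhds
        · filter_upwards [self_mem_nhdsWithin] with t ht
          simp only [Set.mem_compl_iff, Set.mem_singleton_iff] at ht ⊢
          intro h
          apply ht
          have := Complex.ofReal_injective h
          linarith
      have hev : ∀ᶠ t in 𝓝[≠] (0:ℝ), f (p.1, g t) = 0 := by
        have : ∀ᶠ t in 𝓝 (0:ℝ), t ∈ Set.Ioo (-(r/2)) (r/2) :=
          isOpen_Ioo.eventually_mem (by constructor <;> simp <;> linarith)
        filter_upwards [nhdsWithin_le_nhds this] with t ht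
        exact step1 (r/2 + t) (by cases ht; linarith) (by cases ht; linarith) p.1 hp1
      exact htend.frequently hev.frequently
    have := hfan.eqOn_zero_of_preconnected_of_frequently_eq_zero
      (convex_ball (0:ℂ) r).isPreconnected hr2 hfreq hp2
    simpa using this
  have hev0 : f =ᶠ[𝓝 (0:ℂ × ℂ)] 0 := by
    filter_upwards [Metric.ball_mem_nhds (0:ℂ × ℂ) hr] with p hp using step2 p hp
  exact fun z hz =>
    hf.eqOn_zero_of_preconnected_of_eventuallyEq_zero hUconn.isPreconnected h0 hev0 hz
end
end

section
/- Let R = {(z₁, z₂) ∈ ℂ² : (Re z₂)·((Re z₁)² + (Im z₁)²) = (Re z₁)³ and Im z₂ = 0} (Cartan's umbrella) and let p = (0, c) with c ∈ ℝ, c ≠ 0. Then: (a) there is an open neighborhood V of p in ℂ² with R ∩ V = {z ∈ V : z₁ = 0 and Im z₂ = 0}; and (b) the germ at p of the complex line L = {z ∈ ℂ² : z₁ = 0} is the smallest complex analytic germ containing the germ of R at p, i.e. R ∩ V′ ⊆ L for some open neighborhood V′ of p, and for every complex analytic subset Y of any open neighborhood of p with R_p ⊆ Y_p one has L_p ⊆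 Y_p. -/
open scoped ENNReal

noncomputable section

/-!
Near `(0, c)` the umbrella carries only its "handle" `{z₁ = 0, Im z₂ = 0}`: off the handle,
squaring `x₂ (x₁² + y₁²) = x₁³` gives `x₂² ≤ x₁² + y₁²`, which fails where `|x₂| ≈ |c|` and
`z₁ ≈ 0`. The handle is a real segment of the complex line `{z₁ = 0}`, and a holomorphic
function on that line vanishing on a real segment vanishes identically near `c`; so every
complex analytic germ containing the umbrella contains the line.
-/

open Filter Topology

lemma germLE_iff_eventually {E : Type*} [TopologicalSpace E] {R Q : Set E} {p : E} :
    GermLE R Q p ↔ ∀ᶠ z in 𝓝 p, z ∈ R → z ∈ Q := by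
  simp only [GermLE, Filter.Eventually, mem_nhds_iff]
  constructor
  · rintro ⟨V, hV, hpV, hRV⟩
    exact ⟨V, fun z hz hzR => hRV ⟨hzR, hz⟩, hV, hpV⟩
  · rintro ⟨V, hVsub, hV, hpV⟩
    exact ⟨V, hV, hpV, fun z hz => hVsub hz.2 hz.1⟩

lemma IsComplexAnalyticSubset.exists_local_equations {E : Type*} [NormedAddCommGroup E]
    [NormedSpace ℂ E] {W X : Set E} (hX : IsComplexAnalyticSubset W X) {p : E} (hp : p ∈ W) :
    ∃ (k : ℕ) (φ : Fin k → E → ℂ), (∀ i, AnalyticAt ℂ (φ i) p) ∧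
      ∀ᶠ z in 𝓝 p, z ∈ X ↔ ∀ i, φ i z = 0 := by
  obtain ⟨U, hU, hpU, -, k, φ, hφ, hXU⟩ := hX.2 p hp
  refine ⟨k, φ, fun i => hφ i p hpU, ?_⟩
  filter_upwards [hU.mem_nhds hpU] with z hz
  simpa [hz] using Set.ext_iff.mp hXU z

lemma AnalyticAt.eventually_eq_zero_of_eventually_real {E : Type*} [NormedAddCommGroup E]
    [NormedSpace ℂ E] {f : ℂ → E} {c : ℝ} (hf : AnalyticAt ℂ f c)
    (h : ∀ᶠ t : ℝ in 𝓝 c, f t = 0) : ∀ᶠ w in 𝓝 (c : ℂ), f w = 0 := by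
  have hreal : Tendsto ((↑) : ℝ → ℂ) (𝓝[≠] c) (𝓝[≠] (c : ℂ)) :=
    Complex.continuous_ofReal.continuousWithinAt.tendsto_nhdsWithin fun _ h => by simpa using h
  refine hf.frequently_zero_iff_eventually_zero.mp (hreal.frequently ?_)
  exact (h.filter_mono nhdsWithin_le_nhds).frequently

lemma IsComplexAnalyticSubset.eventually_mem_of_eventually_real {E : Type*}
    [NormedAddCommGroup E] [NormedSpace ℂ E] {W Y : Set E} (hY : IsComplexAnalyticSubset W Y)
    {f : ℂ → E} {c : ℝ} (hf : AnalyticAt ℂ f c) (hfc : f c ∈ W)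
    (h : ∀ᶠ t : ℝ in 𝓝 c, f t ∈ Y) : ∀ᶠ w in 𝓝 (c : ℂ), f w ∈ Y := by
  obtain ⟨k, φ, hφ, hYφ⟩ := hY.exists_local_equations hfc
  have hf_tendsto : Tendsto f (𝓝 (c : ℂ)) (𝓝 (f c)) := hf.continuousAt.tendsto
  have hreal : Tendsto (fun t : ℝ => f t) (𝓝 c) (𝓝 (f c)) :=
    hf_tendsto.comp Complex.continuous_ofReal.continuousAt
  have hzero : ∀ i, ∀ᶠ w in 𝓝 (c : ℂ), φ i (f w) = 0 := fun i =>
    ((hφ i).comp hf).eventually_eq_zero_of_eventually_real <| by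
      filter_upwards [h, hreal.eventually hYφ] with t ht hYt
      exact hYt.mp ht i
  filter_upwards [hf_tendsto.eventually hYφ, eventually_all.mpr hzero] with w hw hw0
  exact hw.mpr hw0

lemma abs_re_le_norm_of_mem_cartanUmbrella {z : ℂ × ℂ} (hz : z ∈ cartanUmbrella)
    (hz₁ : z.1 ≠ 0) : |z.2.re| ≤ ‖z.1‖ := by
  obtain ⟨heq, -⟩ := hz
  set a := z.1.re
  set b := z.1.im
  set x := z.2.re
  have hnorm : ‖z.1‖ ^ 2 = a ^ 2 + b ^ 2 := by
    rw [Complex.sq_norm, Complex.normSq_apply]; ring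
  have hs : 0 < a ^ 2 + b ^ 2 := hnorm ▸ pow_pos (norm_pos_iff.mpr hz₁) 2
  have key : x ^ 2 * (a ^ 2 + b ^ 2) ^ 2 ≤ (a ^ 2 + b ^ 2) * (a ^ 2 + b ^ 2) ^ 2 :=
    calc x ^ 2 * (a ^ 2 + b ^ 2) ^ 2 = (a ^ 2) ^ 3 := by rw [← mul_pow, heq]; ring
      _ ≤ (a ^ 2 + b ^ 2) ^ 3 := by gcongr; nlinarith [sq_nonneg b]
      _ = (a ^ 2 + b ^ 2) * (a ^ 2 + b ^ 2) ^ 2 := by ring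
  refine abs_le_of_sq_le_sq ?_ (norm_nonneg _)
  rw [hnorm]
  exact le_of_mul_le_mul_right key (pow_pos hs 2)

lemma zero_ofReal_mem_cartanUmbrella (t : ℝ) : ((0 : ℂ), (t : ℂ)) ∈ cartanUmbrella := by
  simp [cartanUmbrella]

lemma cartanUmbrella_inter_ball (c : ℝ) :
    cartanUmbrella ∩ Metric.ball ((0 : ℂ), (c : ℂ)) (|c| / 2)
      = {z ∈ Metric.ball ((0 : ℂ), (c : ℂ)) (|c| / 2) | z.1 = 0 ∧ z.2.im = 0} := by
  ext z
  simp only [Set.mem_inter_iff, Set.mem_sep_iff]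
  constructor
  · rintro ⟨hz, hball⟩
    refine ⟨hball, ?_, hz.2⟩
    by_contra hz₁
    rw [Metric.mem_ball, Prod.dist_eq, max_lt_iff, dist_zero_right, Complex.dist_eq] at hball
    have hre : |z.2.re - c| ≤ ‖z.2 - c‖ := by
      simpa using Complex.abs_re_le_norm (z.2 - c)
    have hc : |c| - |z.2.re| ≤ |z.2.re - c| := by
      simpa only [abs_sub_comm c] using abs_sub_abs_le_abs_sub c z.2.re
    linarith [abs_re_le_norm_of_mem_cartanUmbrella hz hz₁, hball.1, hball.2]
  · rintro ⟨hball, hz₁, him⟩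
    exact ⟨⟨by simp [hz₁], him⟩, hball⟩

/-- At a point `p = (0, c)`, `c ∈ ℝ \ {0}`, Cartan's umbrella coincides with
`{z₁ = 0, y₂ = 0}` near `p`, and the complex line `{z₁ = 0}` is the smallest complex analytic
germ at `p` containing the germ of the umbrella. -/
theorem statement12 (c : ℝ) (hc : c ≠ 0) :
    (∃ V : Set (ℂ × ℂ), IsOpen V ∧ ((0 : ℂ), (c : ℂ)) ∈ V ∧
      cartanUmbrella ∩ V = {z ∈ V | z.1 = 0 ∧ z.2.im = 0}) ∧
    GermLE cartanUmbrella {z : ℂ × ℂ | z.1 = 0} ((0 : ℂ), (c : ℂ)) ∧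
    ∀ (U' Y : Set (ℂ × ℂ)), IsOpen U' → ((0 : ℂ), (c : ℂ)) ∈ U' →
      IsComplexAnalyticSubset U' Y → GermLE cartanUmbrella Y ((0 : ℂ), (c : ℂ)) →
      GermLE {z : ℂ × ℂ | z.1 = 0} Y ((0 : ℂ), (c : ℂ)) := by
  have hp : ((0 : ℂ), (c : ℂ)) ∈ Metric.ball ((0 : ℂ), (c : ℂ)) (|c| / 2) :=
    Metric.mem_ball_self (by positivity)
  refine ⟨⟨_, Metric.isOpen_ball, hp, cartanUmbrella_inter_ball c⟩,
    ⟨_, Metric.isOpen_ball, hp, fun z hz => (cartanUmbrella_inter_ball c ▸ hz).2.1⟩, ?_⟩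
  intro U' Y _ hpU' hY hRY
  rw [germLE_iff_eventually] at hRY ⊢
  have hreal : ∀ᶠ t : ℝ in 𝓝 c, ((0 : ℂ), (t : ℂ)) ∈ Y :=
    (((continuous_const.prodMk Complex.continuous_ofReal).tendsto c).eventually hRY).mono
      fun t ht => ht (zero_ofReal_mem_cartanUmbrella t)
  have hline : ∀ᶠ w in 𝓝 (c : ℂ), ((0 : ℂ), w) ∈ Y :=
    hY.eventually_mem_of_eventually_real (analyticAt_const.prod analyticAt_id) hpU' hreal
  filter_upwards [(continuous_snd.tendsto ((0 : ℂ), (c : ℂ))).eventually hline] with z hz hz₁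
  rwa [show z = ((0 : ℂ), z.2) from Prod.ext hz₁ rfl]
end
end

section
/- Let R = {(z₁, z₂) ∈ ℂ² : (Re z₂)·((Re z₁)² + (Im z₁)²) = (Re z₁)³}. Then: (a) for every c ∈ ℂ with Re c ≠ 0 there is an open neighborhood V of (0, c) in ℂ² with R ∩ V = {z ∈ V : z₁ = 0}; in particular R ∩ V is a complex analytic subset of V; and (b) for every open neighborhood V of the origin, R ∩ V is not a complex analytic subset of V. (Thus R is a real analytic set which is complex analytic only on some part of it.) -/
open scoped ENNReal

noncomputable section

/-- The set `{x₂(x₁² + y₁²) = x₁³} ⊆ ℂ²`. -/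
def cartanSet : Set (ℂ × ℂ) :=
  {z | z.2.re * (z.1.re ^ 2 + z.1.im ^ 2) = z.1.re ^ 3}


/-!
Off the line `z₁ = 0` the defining equation gives `|Re z₂| · |z₁|² = |Re z₁|³ ≤ |Re z₁| · |z₁|²`,
so `|Re z₂| ≤ |Re z₁|`; near `(0, c)` with `Re c ≠ 0` this is impossible, and there the set is the
complex line `z₁ = 0`.

Near the origin the set contains every point `(t, w)` with `t` real and `Re w = t`. A holomorphic
function vanishing on these points vanishes on a whole bidisc: by the one-variable identity theorem
first in `w` along the vertical line `Re w = t`, then in `z₁` along the real axis. Local defining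
functions of `R ∩ V` at the origin would therefore cut out a bidisc, but `R` contains no bidisc
around the origin.
-/

open Metric Filter Topology Complex

theorem AnalyticOnNhd.eqOn_zero_of_eventually_zero_on_line {f : ℂ → ℂ} {U : Set ℂ}
    (hf : AnalyticOnNhd ℂ f U) (hU : IsPreconnected U) {z₀ d : ℂ} (hz₀ : z₀ ∈ U) (hd : d ≠ 0)
    (hline : ∀ᶠ t : ℝ in 𝓝 0, f (z₀ + t * d) = 0) :
    Set.EqOn f 0 U := by
  have hcont : Continuous fun t : ℝ => z₀ + t * d := by fun_prop
  have htendsto : Tendsto (fun t : ℝ => z₀ + t * d) (𝓝[≠] 0) (𝓝[≠] z₀) := by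
    refine tendsto_nhdsWithin_of_tendsto_nhds_of_eventually_within _ ?_ ?_
    · simpa using (hcont.tendsto 0).mono_left nhdsWithin_le_nhds
    · filter_upwards [self_mem_nhdsWithin] with t ht
      simpa [hd] using ht
  exact hf.eqOn_zero_of_preconnected_of_frequently_eq_zero hU hz₀
    (htendsto.frequently (hline.filter_mono nhdsWithin_le_nhds).frequently)

theorem isComplexAnalyticSubset_zeroSet {E : Type*} [NormedAddCommGroup E] [NormedSpace ℂ E]
    {W : Set E} (hW : IsOpen W) {f : E → ℂ} (hf : AnalyticOnNhd ℂ f W) :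
    IsComplexAnalyticSubset W {x ∈ W | f x = 0} := by
  refine ⟨Set.sep_subset _ _, fun p hp => ⟨W, hW, hp, subset_rfl, 1, fun _ => f, fun _ => hf, ?_⟩⟩
  ext x
  simp [and_comm]

namespace cartanSet

theorem mem_of_fst_eq_zero {z : ℂ × ℂ} (h : z.1 = 0) : z ∈ cartanSet := by
  simp [cartanSet, h]

theorem mk_ofReal_mem {t : ℝ} {w : ℂ} (hw : w.re = t) : ((t : ℂ), w) ∈ cartanSet := by
  simp only [cartanSet, Set.mem_ofPred_eq, ofReal_re, ofReal_im, hw]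
  ring

theorem abs_re_snd_le {z : ℂ × ℂ} (hz : z ∈ cartanSet) (h₁ : z.1 ≠ 0) :
    |z.2.re| ≤ |z.1.re| := by
  have hN : 0 < z.1.re ^ 2 + z.1.im ^ 2 := by
    simpa [normSq_apply, sq] using normSq_pos.2 h₁
  have habs : |z.2.re| * (z.1.re ^ 2 + z.1.im ^ 2) = |z.1.re| * z.1.re ^ 2 := by
    rw [← abs_of_pos hN, ← abs_mul, hz, ← sq_abs z.1.re, abs_pow]
    ring
  have hle : |z.1.re| * z.1.re ^ 2 ≤ |z.1.re| * (z.1.re ^ 2 + z.1.im ^ 2) := by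
    gcongr
    nlinarith [sq_nonneg z.1.im]
  exact le_of_mul_le_mul_right (habs ▸ hle) hN

theorem inter_ball_eq (c : ℂ) :
    cartanSet ∩ ball ((0 : ℂ), c) (|c.re| / 2) =
      {z ∈ ball ((0 : ℂ), c) (|c.re| / 2) | z.1 = 0} := by
  ext z
  simp only [Set.mem_inter_iff, Set.mem_ofPred_eq]
  constructor
  · rintro ⟨hz, hzV⟩
    refine ⟨hzV, by_contra fun h₁ => ?_⟩
    rw [mem_ball, Prod.dist_eq, max_lt_iff, dist_zero_right, dist_eq_norm] at hzV
    have hre₁ := (abs_re_le_norm z.1).trans_lt hzV.1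
    have hre₂ : |z.2.re - c.re| < |c.re| / 2 := by
      simpa using (abs_re_le_norm (z.2 - c)).trans_lt hzV.2
    have := abs_re_snd_le hz h₁
    have := abs_sub_abs_le_abs_sub c.re z.2.re
    rw [abs_sub_comm] at this
    linarith
  · rintro ⟨hzV, h₁⟩
    exact ⟨mem_of_fst_eq_zero h₁, hzV⟩

theorem eqOn_zero_of_forall_mem_inter_ball {f : ℂ × ℂ → ℂ} {r : ℝ}
    (hf : AnalyticOnNhd ℂ f (ball 0 r)) (hzero : ∀ z ∈ cartanSet ∩ ball 0 r, f z = 0) :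
    Set.EqOn f 0 (ball 0 r) := by
  have hprod : ∀ {u w : ℂ}, u ∈ ball 0 r → w ∈ ball 0 r → (u, w) ∈ ball (0 : ℂ × ℂ) r :=
    fun hu hw => by rw [← ball_prod_same]; exact ⟨hu, hw⟩
  have hreal : ∀ t : ℝ, (t : ℂ) ∈ ball (0 : ℂ) r → ∀ w ∈ ball (0 : ℂ) r, f (t, w) = 0 := by
    intro t ht
    refine AnalyticOnNhd.eqOn_zero_of_eventually_zero_on_line
      (fun w hw => (hf _ (hprod ht hw)).comp (by fun_prop)) (convex_ball _ _).isPreconnected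
      ht I_ne_zero ?_
    have hnhds : ∀ᶠ s : ℝ in 𝓝 0, (t : ℂ) + s * I ∈ ball (0 : ℂ) r :=
      (Continuous.tendsto (by fun_prop) 0).eventually (isOpen_ball.mem_nhds (by simpa using ht))
    filter_upwards [hnhds] with s hs
    exact hzero _ ⟨mk_ofReal_mem (by simp), hprod ht hs⟩
  rw [← ball_prod_same]
  rintro ⟨u, w⟩ ⟨hu, hw⟩
  have hr := pos_of_mem_ball hu
  refine AnalyticOnNhd.eqOn_zero_of_eventually_zero_on_line (f := fun x => f (x, w))
    (fun x hx => (hf _ (hprod hx hw)).comp (f := fun x => (x, w)) (by fun_prop))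
    (convex_ball _ _).isPreconnected (mem_ball_self hr) one_ne_zero ?_ hu
  have hnhds : ∀ᶠ s : ℝ in 𝓝 0, (s : ℂ) ∈ ball (0 : ℂ) r :=
    (Continuous.tendsto (by fun_prop) 0).eventually (isOpen_ball.mem_nhds (by simpa using hr))
  filter_upwards [hnhds] with s hs
  simpa using hreal s hs w hw

theorem not_ball_subset {r : ℝ} (hr : 0 < r) : ¬ ball (0 : ℂ × ℂ) r ⊆ cartanSet := by
  intro h
  have hmem : (I * (r / 2 : ℝ), ((r / 2 : ℝ) : ℂ)) ∈ ball (0 : ℂ × ℂ) r := by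
    rw [← ball_prod_same]
    constructor <;> simp [abs_of_pos hr] <;> linarith
  exact hr.ne' (by simpa [cartanSet] using h hmem)

theorem not_isComplexAnalyticSubset_inter {V : Set (ℂ × ℂ)} (hV : (0 : ℂ × ℂ) ∈ V) :
    ¬ IsComplexAnalyticSubset V (cartanSet ∩ V) := by
  rintro ⟨-, hloc⟩
  obtain ⟨U, hU, h0U, hUV, k, φ, hφ, heq⟩ := hloc 0 hV
  obtain ⟨r, hr, hrU⟩ := isOpen_iff.1 hU 0 h0U
  have hφ_zero : ∀ i, Set.EqOn (φ i) 0 (ball 0 r) := fun i =>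
    eqOn_zero_of_forall_mem_inter_ball ((hφ i).mono hrU) fun p ⟨hpR, hp⟩ =>
      (heq ▸ ⟨⟨hpR, hUV (hrU hp)⟩, hrU hp⟩ : p ∈ {x ∈ U | ∀ i, φ i x = 0}).2 i
  refine not_ball_subset hr fun z hz => ?_
  have : z ∈ cartanSet ∩ V ∩ U := heq ▸ ⟨hrU hz, fun i => hφ_zero i hz⟩
  exact this.1.1

end cartanSet

/-- The set `{x₂(x₁² + y₁²) = x₁³}` is complex analytic near every point
`(0, c)` with `Re c ≠ 0`, but not near the origin. -/
theorem statement13 :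
    (∀ c : ℂ, c.re ≠ 0 →
      ∃ V : Set (ℂ × ℂ), IsOpen V ∧ ((0 : ℂ), c) ∈ V ∧
        cartanSet ∩ V = {z ∈ V | z.1 = 0} ∧
        IsComplexAnalyticSubset V (cartanSet ∩ V)) ∧
    ∀ V : Set (ℂ × ℂ), IsOpen V → (0 : ℂ × ℂ) ∈ V →
      ¬ IsComplexAnalyticSubset V (cartanSet ∩ V) := by
  refine ⟨fun c hc => ?_, fun V _ hV => cartanSet.not_isComplexAnalyticSubset_inter hV⟩
  refine ⟨ball (0, c) (|c.re| / 2), isOpen_ball, mem_ball_self (half_pos (abs_pos.2 hc)),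
    cartanSet.inter_ball_eq c, ?_⟩
  rw [cartanSet.inter_ball_eq c]
  exact isComplexAnalyticSubset_zeroSet isOpen_ball analyticOnNhd_fst
end
end

section
/- The set R = {x ∈ ℝ³ : x₃(x₁² + x₂²)(x₁ + x₂) = x₁⁴} is an irreducible real analytic subset of ℝ³ of constant dimension 2, i.e. R cannot be written as the union of two real analytic subsets of ℝ³ each different from R, and the local dimension dim_p R equals 2 at every point p ∈ R. -/
/-!
Off the `x₃`-axis, `R` is the graph of `x₁⁴ / ((x₁² + x₂²)(x₁ + x₂))` over the two open half-planes
`x₁ + x₂ < 0` and `x₁ + x₂ > 0`, and the axis lies in the closure of this graph. Projecting to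
`(x₁, x₂)` shows that `R` meets every neighbourhood of each of its points in a set of Hausdorff
dimension at least 2, while `R` is covered by the `C¹` images of a plane and of a line.

By the identity theorem, an analytic set containing an open piece of a connected analytic sheet
contains the whole sheet. So if `R = A ∪ B`, one of them, say `A`, contains the sheet over
`x₁ + x₂ < 0`. In the blow-up chart `(u, v) ↦ (u, u v, u / ((1 + v²)(1 + v)))`, analytic on the
connected half-plane `v > -1`, this sheet continues through the axis into the other sheet, so `A`
contains both sheets and, being closed, all of `R`.
-/

open scoped ENNReal

noncomputable section

/-- The set `{x ∈ ℝ³ : x₃(x₁² + x₂²)(x₁ + x₂) = x₁⁴}`. -/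
def cartanSet3 : Set (Fin 3 → ℝ) :=
  {x | x 2 * (x 0 ^ 2 + x 1 ^ 2) * (x 0 + x 1) = x 0 ^ 4}

open Set Filter Topology Metric

attribute [local fun_prop] analyticAt_fst analyticAt_snd

@[fun_prop]
theorem analyticAt_apply {𝕜 ι E : Type*} [NontriviallyNormedField 𝕜] [Fintype ι]
    [NormedAddCommGroup E] [NormedSpace 𝕜 E] (i : ι) (x : ι → E) :
    AnalyticAt 𝕜 (fun x : ι → E => x i) x :=
  (ContinuousLinearMap.proj (R := 𝕜) (φ := fun _ : ι => E) i).analyticAt x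

theorem AnalyticOnNhd.dimH_image_le {E F : Type*} [NormedAddCommGroup E] [NormedSpace ℝ E]
    [FiniteDimensional ℝ E] [NormedAddCommGroup F] [NormedSpace ℝ F] [CompleteSpace F]
    {f : E → F} {s : Set E} (hf : AnalyticOnNhd ℝ f s) : dimH (f '' s) ≤ dimH s :=
  dimH_image_le_of_locally_lipschitzOn fun x hx =>
    let ⟨K, t, ht, hK⟩ := ((hf x hx).contDiffAt (n := 1)).exists_lipschitzOnWith
    ⟨K, t, nhdsWithin_le_nhds ht, hK⟩

theorem sq_add_sq_mul_add_ne_zero {a b : ℝ} (h : a + b ≠ 0) : (a ^ 2 + b ^ 2) * (a + b) ≠ 0 := by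
  refine mul_ne_zero (fun h₀ => h ?_) h
  obtain ⟨rfl, rfl⟩ : a = 0 ∧ b = 0 := by
    constructor <;> nlinarith [sq_nonneg a, sq_nonneg b]
  simp

section IsRealAnalyticSubset

variable {E F : Type*} [NormedAddCommGroup E] [NormedSpace ℝ E] [NormedAddCommGroup F]
  [NormedSpace ℝ F]

theorem IsRealAnalyticSubset.isClosed {A : Set E} (hA : IsRealAnalyticSubset univ A) :
    IsClosed A := by
  refine isOpen_compl_iff.1 (isOpen_iff_mem_nhds.2 fun p hp => ?_)
  obtain ⟨U, hUo, hpU, -, k, φ, hφ, hAU⟩ := hA.2 p (mem_univ p)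
  obtain ⟨i, hi⟩ : ∃ i, φ i p ≠ 0 := by
    by_contra! h
    exact hp (hAU.symm.subset ⟨hpU, h⟩).1
  filter_upwards [hUo.mem_nhds hpU, (hφ i p hpU).continuousAt.eventually_ne hi] with x hxU hxi hxA
  exact hxi ((hAU.subset ⟨hxA, hxU⟩).2 i)

/-- The points near which `f` lands in `A` form an open set; it is closed in `H` because, on a ball
mapped into a chart of `A`, the defining functions composed with `f` vanish identically as soon as
they vanish near one point of the ball. -/
theorem IsRealAnalyticSubset.mapsTo_of_preimage_mem_nhds {Ω A : Set E}
    (hA : IsRealAnalyticSubset Ω A) {f : F → E} {H : Set F} (hf : AnalyticOnNhd ℝ f H)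
    (hfH : MapsTo f H Ω) (hHo : IsOpen H) (hHc : IsPreconnected H) {w₀ : F} (hw₀ : w₀ ∈ H)
    (h₀ : f ⁻¹' A ∈ 𝓝 w₀) : MapsTo f H A := by
  suffices H ⊆ interior (f ⁻¹' A) from fun w hw => interior_subset (s := f ⁻¹' A) (this hw)
  refine hHc.subset_of_closure_inter_subset isOpen_interior
    ⟨w₀, hw₀, mem_interior_iff_mem_nhds.2 h₀⟩ ?_
  rintro w ⟨hwT, hwH⟩
  obtain ⟨U, hUo, hwU, -, k, φ, hφ, hAU⟩ := hA.2 (f w) (hfH hwH)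
  obtain ⟨r, hr, hball⟩ := Metric.mem_nhds_iff.1 <| inter_mem (hHo.mem_nhds hwH)
    ((hf w hwH).continuousAt.preimage_mem_nhds (hUo.mem_nhds hwU))
  obtain ⟨w', hw'B, hw'T⟩ := mem_closure_iff_nhds.1 hwT _ (ball_mem_nhds w hr)
  have hzero : ∀ i, EqOn (fun z => φ i (f z)) 0 (ball w r) := fun i =>
    AnalyticOnNhd.eqOn_zero_of_preconnected_of_eventuallyEq_zero
      (fun z hz => (hφ i _ (hball hz).2).comp (hf z (hball hz).1))
      (convex_ball w r).isPreconnected hw'B <| by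
        filter_upwards [isOpen_interior.mem_nhds hw'T, isOpen_ball.mem_nhds hw'B] with z hzA hzB
        exact (hAU.subset ⟨interior_subset (s := f ⁻¹' A) hzA, (hball hzB).2⟩).2 i
  refine mem_interior_iff_mem_nhds.2 (mem_of_superset (ball_mem_nhds w hr) fun z hz => ?_)
  exact (hAU.symm.subset ⟨(hball hz).2, fun i => hzero i hz⟩).1

theorem IsRealAnalyticSubset.mapsTo_or_mapsTo_of_mapsTo_union {A B : Set E} (hA : IsClosed A)
    (hB : IsRealAnalyticSubset univ B) {f : F → E} {H : Set F} (hf : AnalyticOnNhd ℝ f H)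
    (hHo : IsOpen H) (hHc : IsPreconnected H) (hAB : MapsTo f H (A ∪ B)) :
    MapsTo f H A ∨ MapsTo f H B := by
  refine or_iff_not_imp_left.2 fun hnA => ?_
  obtain ⟨w₀, hw₀, hfw₀⟩ : ∃ w₀ ∈ H, f w₀ ∉ A := by simpa [MapsTo] using hnA
  refine hB.mapsTo_of_preimage_mem_nhds hf (mapsTo_univ _ _) hHo hHc hw₀ ?_
  filter_upwards [hHo.mem_nhds hw₀,
    (hf w₀ hw₀).continuousAt.preimage_mem_nhds (hA.isOpen_compl.mem_nhds hfw₀)] with w hwH hwA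
  exact (hAB hwH).resolve_left hwA

end IsRealAnalyticSubset

namespace cartanSet3

def height (w : ℝ × ℝ) : ℝ := w.1 ^ 4 / ((w.1 ^ 2 + w.2 ^ 2) * (w.1 + w.2))

def graph (w : ℝ × ℝ) : Fin 3 → ℝ := ![w.1, w.2, height w]

/-- The blow-up chart `x₁ = u, x₂ = u v`. In it the height becomes `u / ((1 + v²)(1 + v))`,
analytic across `u = 0`, so the chart passes through the `x₃`-axis from the sheet over
`x₁ + x₂ < 0` to the sheet over `x₁ + x₂ > 0`. -/
def chart (p : ℝ × ℝ) : Fin 3 → ℝ := ![p.1, p.1 * p.2, p.1 / ((1 + p.2 ^ 2) * (1 + p.2))]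

theorem analyticOnNhd_graph : AnalyticOnNhd ℝ graph {w | w.1 + w.2 ≠ 0} := fun w hw => by
  have := sq_add_sq_mul_add_ne_zero hw
  rw [analyticAt_pi_iff]
  intro i
  fin_cases i <;> simp [graph, height] <;> fun_prop (disch := exact this)

theorem analyticOnNhd_chart : AnalyticOnNhd ℝ chart {p | -1 < p.2} := fun p hp => by
  have : (1 + p.2 ^ 2) * (1 + p.2) ≠ 0 := by
    have : 0 < 1 + p.2 := by linarith [show -1 < p.2 from hp]
    positivity
  rw [analyticAt_pi_iff]
  intro i
  fin_cases i <;> simp [chart] <;> fun_prop (disch := exact this)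

theorem graph_mem {w : ℝ × ℝ} (hw : w.1 + w.2 ≠ 0) : graph w ∈ cartanSet3 := by
  have h := sq_add_sq_mul_add_ne_zero hw
  have := left_ne_zero_of_mul h
  simp only [cartanSet3, graph, height, mem_ofPred_eq, Matrix.cons_val]
  field_simp

theorem graph_fst_snd {x : Fin 3 → ℝ} (hx : x ∈ cartanSet3) (h : x 0 + x 1 ≠ 0) :
    graph (x 0, x 1) = x := by
  have := sq_add_sq_mul_add_ne_zero h
  ext i
  fin_cases i
  · rfl
  · rfl
  · simp only [graph, height, Fin.reduceFinMk, Matrix.cons_val, div_eq_iff this]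
    rw [← mul_assoc]
    exact hx.symm

theorem eq_axis_of_add_eq_zero {x : Fin 3 → ℝ} (hx : x ∈ cartanSet3) (h : x 0 + x 1 = 0) :
    x = ![0, 0, x 2] := by
  have hx0 : x 0 = 0 := by
    have : x 0 ^ 4 = 0 := by rw [← hx.out, h, mul_zero]
    exact pow_eq_zero_iff (by norm_num) |>.1 this
  have hx1 : x 1 = 0 := by linarith
  ext i
  fin_cases i <;> simp [hx0, hx1]

theorem graph_eq_chart {u v : ℝ} (hu : u ≠ 0) (hv : 1 + v ≠ 0) :
    graph (u, u * v) = chart (u, v) := by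
  have : 1 + v ^ 2 ≠ 0 := by positivity
  ext i
  fin_cases i
  · rfl
  · rfl
  · simp only [graph, chart, height, Fin.reduceFinMk, Matrix.cons_val]
    field_simp

/-- `(0, 0, c)` is the limit, as `ε → 0⁺`, of the graph points over `(u, u (ε - 1))` with
`u = (c + ε)(1 + (ε - 1)²) ε`, whose height is `c + ε`; the shift by `ε` keeps `u ≠ 0` when
`c = 0`. -/
theorem subset_closure_graph : cartanSet3 ⊆ closure (graph '' {w | w.1 + w.2 ≠ 0}) := by
  intro x hx
  by_cases h : x 0 + x 1 = 0
  swap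
  · exact subset_closure ⟨(x 0, x 1), h, graph_fst_snd hx h⟩
  set c := x 2
  let u : ℝ → ℝ := fun ε => (c + ε) * (1 + (ε - 1) ^ 2) * ε
  let γ : ℝ → Fin 3 → ℝ := fun ε => ![u ε, u ε * (ε - 1), c + ε]
  have hγ : Continuous γ := by
    refine continuous_pi fun i => ?_
    fin_cases i <;> simp [γ, u] <;> fun_prop
  have hc : ∀ᶠ ε in 𝓝[>] 0, c + ε ≠ 0 := by
    rcases eq_or_ne c 0 with hc | hc
    · filter_upwards [self_mem_nhdsWithin] with ε hε
      simpa [hc] using hε.ne'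
    · filter_upwards [eventually_ne_nhdsWithin (neg_ne_zero.2 hc).symm] with ε hε
      contrapose! hε
      linarith
  rw [eq_axis_of_add_eq_zero hx h]
  refine mem_closure_of_tendsto (f := γ) (b := 𝓝[>] 0) ?_ ?_
  · simpa [γ, u] using (hγ.tendsto 0).mono_left nhdsWithin_le_nhds
  filter_upwards [hc, self_mem_nhdsWithin] with ε hcε hε
  have hε : 0 < ε := hε
  have hu : u ε ≠ 0 := mul_ne_zero (mul_ne_zero hcε (by positivity)) hε.ne'
  refine ⟨(u ε, u ε * (ε - 1)), ?_, ?_⟩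
  · show u ε + u ε * (ε - 1) ≠ 0
    rw [show u ε + u ε * (ε - 1) = u ε * ε by ring]
    exact mul_ne_zero hu hε.ne'
  · rw [graph_eq_chart hu (by simpa using hε.ne')]
    have : 1 + (ε - 1) ^ 2 ≠ 0 := by positivity
    have : ε ≠ 0 := hε.ne'
    ext i
    fin_cases i
    · rfl
    · rfl
    · simp only [chart, γ, u, Fin.reduceFinMk, Matrix.cons_val, add_sub_cancel]
      field_simp

theorem mapsTo_graph_pos_of_mapsTo_graph_neg {A : Set (Fin 3 → ℝ)}
    (hA : IsRealAnalyticSubset univ A) (hneg : MapsTo graph {w | w.1 + w.2 < 0} A) :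
    MapsTo graph {w | 0 < w.1 + w.2} A := by
  have hchart : MapsTo chart {p | -1 < p.2} A := by
    refine hA.mapsTo_of_preimage_mem_nhds analyticOnNhd_chart (mapsTo_univ _ _)
      (isOpen_lt continuous_const continuous_snd)
      (convex_halfSpace_gt (LinearMap.snd ℝ ℝ ℝ).isLinear _).isPreconnected
      (w₀ := (-1, 0)) (by norm_num) ?_
    filter_upwards [(continuous_fst.tendsto _).eventually_lt_const (show (-1 : ℝ) < 0 by norm_num),
      (continuous_snd.tendsto _).eventually_const_lt (show (-1 : ℝ) < 0 by norm_num)]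
      with p hu hv
    rw [mem_preimage, ← graph_eq_chart hu.ne (by linarith)]
    exact hneg (show p.1 + p.1 * p.2 < 0 by nlinarith)
  have hsum : Continuous fun w : ℝ × ℝ => w.1 + w.2 := by fun_prop
  refine hA.mapsTo_of_preimage_mem_nhds (analyticOnNhd_graph.mono fun w hw => ne_of_gt hw)
    (mapsTo_univ _ _) (isOpen_lt continuous_const hsum)
    (convex_halfSpace_gt (LinearMap.fst ℝ ℝ ℝ + LinearMap.snd ℝ ℝ ℝ).isLinear _).isPreconnected
    (w₀ := (1, 0)) (by norm_num) ?_
  filter_upwards [(continuous_fst.tendsto _).eventually_const_lt (show (0 : ℝ) < 1 by norm_num),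
    (hsum.tendsto _).eventually_const_lt (show (0 : ℝ) < 1 + 0 by norm_num)] with w hu hw
  have hv : -1 < w.2 / w.1 := by
    rw [lt_div_iff₀ hu]
    linarith
  rw [mem_preimage, show w = (w.1, w.1 * (w.2 / w.1)) by field_simp,
    graph_eq_chart hu.ne' (by linarith)]
  exact hchart hv

theorem subset_of_mapsTo_graph_neg {A : Set (Fin 3 → ℝ)} (hA : IsRealAnalyticSubset univ A)
    (hneg : MapsTo graph {w | w.1 + w.2 < 0} A) : cartanSet3 ⊆ A := by
  have hpos := mapsTo_graph_pos_of_mapsTo_graph_neg hA hneg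
  refine subset_closure_graph.trans (closure_minimal ?_ hA.isClosed)
  rintro _ ⟨w, hw, rfl⟩
  rcases hw.lt_or_gt with hw | hw
  exacts [hneg hw, hpos hw]

theorem eq_or_eq_of_eq_union {A B : Set (Fin 3 → ℝ)} (hA : IsRealAnalyticSubset univ A)
    (hB : IsRealAnalyticSubset univ B) (hAB : cartanSet3 = A ∪ B) :
    A = cartanSet3 ∨ B = cartanSet3 := by
  have hneg : MapsTo graph {w | w.1 + w.2 < 0} (A ∪ B) := fun w hw => hAB ▸ graph_mem hw.ne
  rcases hB.mapsTo_or_mapsTo_of_mapsTo_union hA.isClosed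
    (analyticOnNhd_graph.mono fun w hw => ne_of_lt hw)
    (isOpen_lt (continuous_fst.add continuous_snd) continuous_const)
    (convex_halfSpace_lt (LinearMap.fst ℝ ℝ ℝ + LinearMap.snd ℝ ℝ ℝ).isLinear _).isPreconnected
    hneg with h | h
  · exact .inl ((hAB ▸ subset_union_left).antisymm (subset_of_mapsTo_graph_neg hA h))
  · exact .inr ((hAB ▸ subset_union_right).antisymm (subset_of_mapsTo_graph_neg hB h))

theorem dimH_le : dimH cartanSet3 ≤ 2 := by
  have hcover : cartanSet3 ⊆
      graph '' {w | w.1 + w.2 ≠ 0} ∪ range fun t : ℝ => (![0, 0, t] : Fin 3 → ℝ) := by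
    intro x hx
    by_cases h : x 0 + x 1 = 0
    · exact .inr ⟨x 2, (eq_axis_of_add_eq_zero hx h).symm⟩
    · exact .inl ⟨(x 0, x 1), h, graph_fst_snd hx h⟩
  have haxis : ContDiff ℝ 1 fun t : ℝ => (![0, 0, t] : Fin 3 → ℝ) :=
    contDiff_pi.2 fun i => by fin_cases i <;> simp <;> fun_prop
  refine (dimH_mono hcover).trans ((dimH_union _ _).trans_le (max_le ?_ ?_))
  · calc dimH (graph '' {w | w.1 + w.2 ≠ 0}) ≤ dimH {w : ℝ × ℝ | w.1 + w.2 ≠ 0} :=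
          analyticOnNhd_graph.dimH_image_le
      _ ≤ dimH (univ : Set (ℝ × ℝ)) := dimH_mono (subset_univ _)
      _ = 2 := by simp [Real.dimH_univ_eq_finrank]
  · calc dimH (range fun t : ℝ => (![0, 0, t] : Fin 3 → ℝ)) ≤ Module.finrank ℝ ℝ :=
          haxis.dimH_range_le
      _ ≤ 2 := by norm_num

theorem two_le_dimH_inter {p : Fin 3 → ℝ} (hp : p ∈ cartanSet3) {U : Set (Fin 3 → ℝ)}
    (hU : IsOpen U) (hpU : p ∈ U) : 2 ≤ dimH (cartanSet3 ∩ U) := by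
  obtain ⟨_, hwU, w, hw, rfl⟩ := mem_closure_iff.1 (subset_closure_graph hp) U hU hpU
  let π : (Fin 3 → ℝ) →L[ℝ] ℝ × ℝ := (ContinuousLinearMap.proj 0).prod (ContinuousLinearMap.proj 1)
  have hN : {w | w.1 + w.2 ≠ 0} ∩ graph ⁻¹' U ∈ 𝓝 w :=
    inter_mem ((isOpen_ne_fun (by fun_prop) continuous_const).mem_nhds hw)
      ((analyticOnNhd_graph w hw).continuousAt.preimage_mem_nhds (hU.mem_nhds hwU))
  have hsub : {w | w.1 + w.2 ≠ 0} ∩ graph ⁻¹' U ⊆ π '' (cartanSet3 ∩ U) :=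
    fun z hz => ⟨graph z, ⟨graph_mem hz.1, hz.2⟩, by simp [π, graph]⟩
  calc (2 : ℝ≥0∞) = dimH ({w | w.1 + w.2 ≠ 0} ∩ graph ⁻¹' U) := by
        simp [Real.dimH_of_mem_nhds hN]
    _ ≤ dimH (π '' (cartanSet3 ∩ U)) := dimH_mono hsub
    _ ≤ dimH (cartanSet3 ∩ U) := π.lipschitz.dimH_image_le _

theorem locDim_eq_two {p : Fin 3 → ℝ} (hp : p ∈ cartanSet3) : locDim cartanSet3 p = 2 := by
  refine le_antisymm ?_ (le_iInf₂ fun U hU => le_iInf fun hpU => two_le_dimH_inter hp hU hpU)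
  calc locDim cartanSet3 p ≤ dimH (cartanSet3 ∩ univ) :=
        iInf₂_le_of_le univ isOpen_univ (iInf_le _ (mem_univ p))
    _ ≤ 2 := by simpa using dimH_le

theorem isRealAnalyticSubset : IsRealAnalyticSubset univ cartanSet3 := by
  refine ⟨subset_univ _, fun p _ => ⟨univ, isOpen_univ, mem_univ _, subset_rfl, 1,
    fun _ x => x 2 * (x 0 ^ 2 + x 1 ^ 2) * (x 0 + x 1) - x 0 ^ 4,
    fun _ x _ => by fun_prop, ?_⟩⟩
  ext x
  simp [cartanSet3, sub_eq_zero]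

end cartanSet3

/-- The set `{x₃(x₁² + x₂²)(x₁ + x₂) = x₁⁴} ⊆ ℝ³` is an irreducible real
analytic set of constant dimension `2`. -/
theorem statement14 :
    IsRealAnalyticSubset (Set.univ : Set (Fin 3 → ℝ)) cartanSet3 ∧
    (∀ A B : Set (Fin 3 → ℝ),
      IsRealAnalyticSubset (Set.univ : Set (Fin 3 → ℝ)) A →
      IsRealAnalyticSubset (Set.univ : Set (Fin 3 → ℝ)) B →
      cartanSet3 = A ∪ B → A = cartanSet3 ∨ B = cartanSet3) ∧
    ∀ p ∈ cartanSet3, locDim cartanSet3 p = (2 : ℝ≥0∞) :=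
  ⟨cartanSet3.isRealAnalyticSubset, fun _ _ => cartanSet3.eq_or_eq_of_eq_union,
    fun _ => cartanSet3.locDim_eq_two⟩
end
end
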